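/- Let n be a positive integer and K ≥ 1 a real number. Let a^{jk} : ℝⁿ → ℝ (1 ≤ j,k ≤ n) be continuously differentiable with a^{jk} = a^{kj}, |a^{jk}| ≤ K and |∂_{x_l} a^{jk}| ≤ K; let β : ℝⁿ → ℝ be twice continuously differentiable with 0 ≤ β ≤ 1 and first and second partial derivatives bounded by K; let γ : ℝ → ℝ be continuously differentiable with γ(t) > 0 for all t. Fix real numbers m ≥ 1, λ ≥ 1, μ ≥ 1, set α(x) = e^{μ(6m+β(x))} − μe^{μ(6m+6)}, ξ(t,x) = γ(t)·e^{μ(6m+β(x))}, φ(t,x) = γ(t)·α(x) and ℓ(t,x) = λφ(t,x). Then there exists a constant C depending only on n and K such that for all (t,x), |(Σ_{j,k=1}^n ∂_{x_k}(a^{jk}·∂_{x_j}ℓ)(t,x))·∂_tℓ(t,x) − (γ′(t)/γ(t))·λ²μ²ξ(t,x)·φ(t,x)·Ψ(x)| ≤ C·|γ′(t)/γ(t)|·λ²μ·ξ(t,x)·|φ(t,x)|, where Ψ(x) = Σ_{j,k=1}^n a^{jk}(x)·∂_jβ(x)·∂_kβ(x). -/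

import Mathlib

/-!
Since `ℓ = λγ(e^{μ(6m+β)} - const)`, one has `∂_j ℓ = λγμ e^{μ(6m+β)} ∂_jβ`, and by the product
rule `Σ_{j,k} ∂_k(a^{jk} ∂_jℓ) = λγμ e^{μ(6m+β)} (μΨ + Σ_{j,k} ∂_k(a^{jk} ∂_jβ))`. Multiplying by
`∂_tℓ = λγ'α`, the `μΨ` part is exactly the leading term `(γ'/γ)λ²μ²ξφΨ`, and what remains is
`(γ'/γ)λ²μξφ` times `Σ_{j,k} ∂_k(a^{jk} ∂_jβ)`, which is bounded by `2n²K²`.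
-/

/-- The `j`-th partial derivative of a function on `ℝⁿ`. -/
noncomputable def pd {n : ℕ} (f : EuclideanSpace ℝ (Fin n) → ℝ) (j : Fin n)
    (x : EuclideanSpace ℝ (Fin n)) : ℝ :=
  fderiv ℝ f x (EuclideanSpace.single j 1)

/-- The Carleman weight exponent `ℓ(x) = λγ(e^{μ(6m+β(x))} - μe^{μ(6m+6)})` at frozen time. -/
noncomputable def ellFun {n : ℕ} (m lam mu γ : ℝ) (β : EuclideanSpace ℝ (Fin n) → ℝ)
    (x : EuclideanSpace ℝ (Fin n)) : ℝ :=
  lam * γ * (Real.exp (mu * (6 * m + β x)) - mu * Real.exp (mu * (6 * m + 6)))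

variable {n : ℕ}

section PartialDerivative

variable {f g : EuclideanSpace ℝ (Fin n) → ℝ} {j : Fin n} {x : EuclideanSpace ℝ (Fin n)}

lemma pd_mul (hf : DifferentiableAt ℝ f x) (hg : DifferentiableAt ℝ g x) :
    pd (fun y => f y * g y) j x = pd f j x * g x + f x * pd g j x := by
  simp only [pd, fderiv_fun_mul hf hg, add_apply, smul_apply, smul_eq_mul]
  ring

lemma pd_const_mul (c : ℝ) : pd (fun y => c * f y) j x = c * pd f j x := by
  simp [pd, ← smul_eq_mul, ← Pi.smul_def, fderiv_const_smul_field]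

lemma pd_const_add (c : ℝ) : pd (fun y => c + f y) j x = pd f j x := by
  simp [pd, fderiv_const_add]

lemma pd_sub_const (c : ℝ) : pd (fun y => f y - c) j x = pd f j x := by
  simp [pd, fderiv_sub_const]

lemma pd_exp (hf : DifferentiableAt ℝ f x) :
    pd (fun y => Real.exp (f y)) j x = Real.exp (f x) * pd f j x := by
  simp [pd, hf.hasFDerivAt.exp.fderiv]

lemma ContDiff.pd {f : EuclideanSpace ℝ (Fin n) → ℝ} {k : ℕ} (hf : ContDiff ℝ (k + 1) f)
    (j : Fin n) : ContDiff ℝ k (pd f j) :=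
  (hf.fderiv_right le_rfl).clm_apply contDiff_const

end PartialDerivative

section CarlemanWeight

variable {a : EuclideanSpace ℝ (Fin n) → ℝ} {β : EuclideanSpace ℝ (Fin n) → ℝ}
  {x : EuclideanSpace ℝ (Fin n)} {j k : Fin n} {m lam mu γ : ℝ}

lemma pd_exp_mul_const_add (hβ : DifferentiableAt ℝ β x) (c : ℝ) :
    pd (fun y => Real.exp (mu * (c + β y))) j x
      = mu * Real.exp (mu * (c + β x)) * pd β j x := by
  rw [pd_exp ((hβ.const_add c).const_mul mu), pd_const_mul, pd_const_add]
  ring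

lemma pd_ellFun (hβ : DifferentiableAt ℝ β x) :
    pd (ellFun m lam mu γ β) j x
      = lam * γ * mu * Real.exp (mu * (6 * m + β x)) * pd β j x := by
  change pd (fun y => lam * γ * (Real.exp (mu * (6 * m + β y)) - _)) j x = _
  rw [pd_const_mul, pd_sub_const, pd_exp_mul_const_add hβ]
  ring

lemma pd_mul_pd_ellFun (ha : DifferentiableAt ℝ a x) (hβ : Differentiable ℝ β)
    (hβj : DifferentiableAt ℝ (pd β j) x) :
    pd (fun y => a y * pd (ellFun m lam mu γ β) j y) k x
      = lam * γ * mu * Real.exp (mu * (6 * m + β x)) *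
          (mu * (a x * pd β j x * pd β k x) + (pd a k x * pd β j x + a x * pd (pd β j) k x)) := by
  have hexp : DifferentiableAt ℝ (fun y => Real.exp (mu * (6 * m + β y))) x :=
    ((hβ x).const_add _).const_mul mu |>.exp
  have hfun : (fun y => a y * pd (ellFun m lam mu γ β) j y)
      = fun y => lam * γ * mu * (a y * (Real.exp (mu * (6 * m + β y)) * pd β j y)) := by
    ext y
    rw [pd_ellFun (hβ y)]
    ring
  rw [hfun, pd_const_mul, pd_mul ha (hexp.fun_mul hβj), pd_mul hexp hβj,
    pd_exp_mul_const_add (hβ x)]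
  ring

end CarlemanWeight

section DivergenceTerm

open Finset

variable {a : Fin n → Fin n → EuclideanSpace ℝ (Fin n) → ℝ} {β : EuclideanSpace ℝ (Fin n) → ℝ}
  {x : EuclideanSpace ℝ (Fin n)}

lemma sum_pd_mul_pd_ellFun (m lam mu γ : ℝ) (ha : ∀ j k, DifferentiableAt ℝ (a j k) x)
    (hβ : Differentiable ℝ β) (hβj : ∀ j, DifferentiableAt ℝ (pd β j) x) :
    ∑ j, ∑ k, pd (fun y => a j k y * pd (ellFun m lam mu γ β) j y) k x
      = lam * γ * mu * Real.exp (mu * (6 * m + β x)) *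
          (mu * ∑ j, ∑ k, a j k x * pd β j x * pd β k x
            + ∑ j, ∑ k, (pd (a j k) k x * pd β j x + a j k x * pd (pd β j) k x)) := by
  simp only [pd_mul_pd_ellFun (ha _ _) hβ (hβj _), mul_sum, ← sum_add_distrib]

lemma abs_sum_pd_mul_add_mul_pd_le {K : ℝ} (ha : ∀ j k, |a j k x| ≤ K)
    (hda : ∀ j k l, |pd (a j k) l x| ≤ K) (hβ₁ : ∀ j, |pd β j x| ≤ K)
    (hβ₂ : ∀ j k, |pd (pd β j) k x| ≤ K) :
    |∑ j, ∑ k, (pd (a j k) k x * pd β j x + a j k x * pd (pd β j) k x)|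
      ≤ 2 * n ^ 2 * K ^ 2 := by
  have hterm (j k : Fin n) :
      |pd (a j k) k x * pd β j x + a j k x * pd (pd β j) k x| ≤ 2 * K ^ 2 := by
    have hK : 0 ≤ K := (abs_nonneg _).trans (ha j k)
    calc _ ≤ |pd (a j k) k x| * |pd β j x| + |a j k x| * |pd (pd β j) k x| := by
          rw [← abs_mul, ← abs_mul]
          exact abs_add_le _ _
      _ ≤ K * K + K * K := add_le_add (mul_le_mul (hda j k k) (hβ₁ j) (abs_nonneg _) hK)
          (mul_le_mul (ha j k) (hβ₂ j k) (abs_nonneg _) hK)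
      _ = 2 * K ^ 2 := by ring
  calc _ ≤ ∑ j, ∑ k, |pd (a j k) k x * pd β j x + a j k x * pd (pd β j) k x| :=
        (abs_sum_le_sum_abs _ _).trans (sum_le_sum fun j _ => abs_sum_le_sum_abs _ _)
    _ ≤ ∑ _j : Fin n, ∑ _k : Fin n, 2 * K ^ 2 :=
        sum_le_sum fun j _ => sum_le_sum fun k _ => hterm j k
    _ = 2 * n ^ 2 * K ^ 2 := by
        simp only [sum_const, card_univ, Fintype.card_fin, nsmul_eq_mul]
        ring

end DivergenceTerm

theorem stmt11_general (n : ℕ) (K : ℝ) :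
    ∃ C : ℝ, 0 < C ∧
      ∀ (a : Fin n → Fin n → EuclideanSpace ℝ (Fin n) → ℝ)
        (β : EuclideanSpace ℝ (Fin n) → ℝ) (γ : ℝ → ℝ) (m lam mu : ℝ),
        (∀ j k, ContDiff ℝ 1 (a j k)) →
        (∀ j k, a j k = a k j) →
        (∀ j k x, |a j k x| ≤ K) →
        (∀ j k l x, |pd (a j k) l x| ≤ K) →
        ContDiff ℝ 2 β →
        (∀ x, 0 ≤ β x ∧ β x ≤ 1) →
        (∀ j x, |pd β j x| ≤ K) →
        (∀ j k x, |pd (pd β j) k x| ≤ K) →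
        ContDiff ℝ 1 γ →
        (∀ t, 0 < γ t) →
        1 ≤ m → 1 ≤ lam → 1 ≤ mu →
        ∀ (t : ℝ) (x : EuclideanSpace ℝ (Fin n)),
          |(∑ j : Fin n, ∑ k : Fin n,
              pd (fun y => a j k y * pd (ellFun m lam mu (γ t) β) j y) k x) *
              deriv (fun s => lam * (γ s *
                (Real.exp (mu * (6 * m + β x)) - mu * Real.exp (mu * (6 * m + 6))))) t -
              (deriv γ t / γ t) * lam ^ 2 * mu ^ 2 *
                (γ t * Real.exp (mu * (6 * m + β x))) *
                (γ t * (Real.exp (mu * (6 * m + β x)) - mu * Real.exp (mu * (6 * m + 6)))) *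
                (∑ j : Fin n, ∑ k : Fin n, a j k x * pd β j x * pd β k x)|
            ≤ C * |deriv γ t / γ t| * lam ^ 2 * mu *
                (γ t * Real.exp (mu * (6 * m + β x))) *
                |γ t * (Real.exp (mu * (6 * m + β x)) - mu * Real.exp (mu * (6 * m + 6)))| := by
  refine ⟨2 * n ^ 2 * K ^ 2 + 1, by positivity, ?_⟩
  intro a β γ m lam mu ha _ haK hdaK hβ _ hβK hβ2K _ hγ _ _ hmu t x
  set e := Real.exp (mu * (6 * m + β x))
  set α := e - mu * Real.exp (mu * (6 * m + 6))
  set S := ∑ j, ∑ k, (pd (a j k) k x * pd β j x + a j k x * pd (pd β j) k x)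
  have hsum := sum_pd_mul_pd_ellFun m lam mu (γ t)
    (fun j k => (ha j k).differentiable one_ne_zero x) (hβ.differentiable two_ne_zero)
    (fun j => (hβ.pd (k := 1) j).differentiable one_ne_zero x)
  have hdt : deriv (fun s => lam * (γ s * α)) t = lam * (deriv γ t * α) := by
    rw [deriv_const_mul_field, deriv_mul_const_field]
  have hS : |S| ≤ 2 * n ^ 2 * K ^ 2 + 1 :=
    (abs_sum_pd_mul_add_mul_pd_le (haK · · x) (hdaK · · · x) (hβK · x) (hβ2K · · x)).trans
      (le_add_of_nonneg_right zero_le_one)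
  have hγt := hγ t
  have hexpand (Ψ : ℝ) :
      lam * γ t * mu * e * (mu * Ψ + S) * (lam * (deriv γ t * α))
        - deriv γ t / γ t * lam ^ 2 * mu ^ 2 * (γ t * e) * (γ t * α) * Ψ
      = (deriv γ t / γ t * lam ^ 2 * mu * (γ t * e) * (γ t * α)) * S := by
    field_simp
    ring
  rw [hsum, hdt, hexpand]
  calc _ ≤ |deriv γ t / γ t * lam ^ 2 * mu * (γ t * e) * (γ t * α)|
        * (2 * n ^ 2 * K ^ 2 + 1) := by
        rw [abs_mul]
        exact mul_le_mul_of_nonneg_left hS (abs_nonneg _)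
    _ = _ := by
        rw [abs_mul, abs_mul, abs_mul, abs_mul, abs_of_nonneg (sq_nonneg lam),
          abs_of_nonneg (by linarith : (0 : ℝ) ≤ mu), abs_of_pos (by positivity : 0 < γ t * e)]
        ring

/-- The expansion `Σ_{j,k}(a^{jk}ℓ_j)_k · ℓ_t = (γ_t/γ)[λ²μ²ξφΨ + O(λ²)μξφ]` from the
estimate of the zeroth-order coefficient in the Carleman identity, with a constant
depending only on `n` and `K`. -/
theorem stmt11 (n : ℕ) (hn : 0 < n) (K : ℝ) (hK : 1 ≤ K) :
    ∃ C : ℝ, 0 < C ∧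
      ∀ (a : Fin n → Fin n → EuclideanSpace ℝ (Fin n) → ℝ)
        (β : EuclideanSpace ℝ (Fin n) → ℝ) (γ : ℝ → ℝ) (m lam mu : ℝ),
        (∀ j k, ContDiff ℝ 1 (a j k)) →
        (∀ j k, a j k = a k j) →
        (∀ j k x, |a j k x| ≤ K) →
        (∀ j k l x, |pd (a j k) l x| ≤ K) →
        ContDiff ℝ 2 β →
        (∀ x, 0 ≤ β x ∧ β x ≤ 1) →
        (∀ j x, |pd β j x| ≤ K) →
        (∀ j k x, |pd (pd β j) k x| ≤ K) →
        ContDiff ℝ 1 γ →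
        (∀ t, 0 < γ t) →
        1 ≤ m → 1 ≤ lam → 1 ≤ mu →
        ∀ (t : ℝ) (x : EuclideanSpace ℝ (Fin n)),
          |(∑ j : Fin n, ∑ k : Fin n,
              pd (fun y => a j k y * pd (ellFun m lam mu (γ t) β) j y) k x) *
              deriv (fun s => lam * (γ s *
                (Real.exp (mu * (6 * m + β x)) - mu * Real.exp (mu * (6 * m + 6))))) t -
              (deriv γ t / γ t) * lam ^ 2 * mu ^ 2 *
                (γ t * Real.exp (mu * (6 * m + β x))) *
                (γ t * (Real.exp (mu * (6 * m + β x)) - mu * Real.exp (mu * (6 * m + 6)))) *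
                (∑ j : Fin n, ∑ k : Fin n, a j k x * pd β j x * pd β k x)|
            ≤ C * |deriv γ t / γ t| * lam ^ 2 * mu *
                (γ t * Real.exp (mu * (6 * m + β x))) *
                |γ t * (Real.exp (mu * (6 * m + β x)) - mu * Real.exp (mu * (6 * m + 6)))| :=
  stmt11_general n K
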